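/- arXiv:1604.04392 — 2 statements merged into one kernel-verified Lean document; each statement's English description precedes it below -/
import Mathlib

section
/- The map u ↦ u⁺ (pointwise positive part) is not bounded from H¹(0,1)* to H¹(0,1)*: the functions ψₙ(x) = cos(nπx) satisfy ‖ψₙ‖_{H¹*} → 0 as n → ∞, but ‖ψₙ⁺‖_{H¹*} does not converge to 0. -/
open Real MeasureTheory Filter

/-!
For `n ≥ 1`, integrating by parts against `sin (nπx) / (nπ)`, which vanishes at both ends,
gives `∫₀¹ cos (nπx) v = -(nπ)⁻¹ ∫₀¹ sin (nπx) v'`, and the right side is at most `(nπ)⁻¹`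
on the unit ball of `H¹`; hence `‖ψₙ‖_{H¹*} ≤ (nπ)⁻¹`. On the other hand, testing `ψₙ⁺`
against the constant `1` gives `‖ψₙ⁺‖_{H¹*} ≥ ∫₀¹ ψₙ⁺ ≥ ∫₀¹ (ψₙ + ψₙ²) / 2 = 1/4`.
-/

/-- The `H¹(0,1)*` norm of `f ∈ L²(0,1)`, realized as the supremum of the pairings
`∫₀¹ f v` over `v` in the unit ball of `H¹(0,1)` (taken in the dense subspace of
`C¹` functions). -/
noncomputable def dualH1Norm (f : ℝ → ℝ) : ℝ :=
  sSup {y | ∃ v : ℝ → ℝ, ContDiff ℝ 1 v ∧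
    (∫ x in (0:ℝ)..1, ((deriv v x)^2 + (v x)^2)) ≤ 1 ∧
    y = ∫ x in (0:ℝ)..1, f x * v x}

def dualH1Pairings (f : ℝ → ℝ) : Set ℝ :=
  {y | ∃ v : ℝ → ℝ, ContDiff ℝ 1 v ∧
    (∫ x in (0:ℝ)..1, ((deriv v x)^2 + (v x)^2)) ≤ 1 ∧
    y = ∫ x in (0:ℝ)..1, f x * v x}

lemma dualH1Norm_eq_sSup (f : ℝ → ℝ) : dualH1Norm f = sSup (dualH1Pairings f) := rfl

lemma zero_mem_dualH1Pairings (f : ℝ → ℝ) : (0:ℝ) ∈ dualH1Pairings f :=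
  ⟨fun _ => 0, contDiff_const, by simp, by simp⟩

lemma dualH1Norm_nonneg (f : ℝ → ℝ) : 0 ≤ dualH1Norm f :=
  Real.sSup_nonneg' ⟨0, zero_mem_dualH1Pairings f, le_rfl⟩

lemma dualH1Norm_le {f : ℝ → ℝ} {C : ℝ}
    (h : ∀ v : ℝ → ℝ, ContDiff ℝ 1 v → (∫ x in (0:ℝ)..1, ((deriv v x)^2 + (v x)^2)) ≤ 1 →
      (∫ x in (0:ℝ)..1, f x * v x) ≤ C) :
    dualH1Norm f ≤ C := by
  refine csSup_le ⟨0, zero_mem_dualH1Pairings f⟩ ?_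
  rintro y ⟨v, hv, hE, rfl⟩
  exact h v hv hE

lemma integral_sq_le_one_and_integral_deriv_sq_le_one {v : ℝ → ℝ} (hv : ContDiff ℝ 1 v)
    (hE : (∫ x in (0:ℝ)..1, ((deriv v x)^2 + (v x)^2)) ≤ 1) :
    (∫ x in (0:ℝ)..1, (v x)^2) ≤ 1 ∧ (∫ x in (0:ℝ)..1, (deriv v x)^2) ≤ 1 := by
  have hsplit : (∫ x in (0:ℝ)..1, ((deriv v x)^2 + (v x)^2))
      = (∫ x in (0:ℝ)..1, (deriv v x)^2) + ∫ x in (0:ℝ)..1, (v x)^2 :=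
    intervalIntegral.integral_add
      (((hv.continuous_deriv le_rfl).pow 2).intervalIntegrable 0 1)
      ((hv.continuous.pow 2).intervalIntegrable 0 1)
  have hv2 : 0 ≤ ∫ x in (0:ℝ)..1, (v x)^2 :=
    intervalIntegral.integral_nonneg zero_le_one fun x _ => sq_nonneg _
  have hdv2 : 0 ≤ ∫ x in (0:ℝ)..1, (deriv v x)^2 :=
    intervalIntegral.integral_nonneg zero_le_one fun x _ => sq_nonneg _
  constructor <;> linarith

lemma integral_mul_le_of_abs_le {g w : ℝ → ℝ} {M : ℝ} (hg : Continuous g) (hw : Continuous w)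
    (hgM : ∀ x ∈ Set.Icc (0:ℝ) 1, |g x| ≤ M) (hw2 : (∫ x in (0:ℝ)..1, (w x)^2) ≤ 1) :
    (∫ x in (0:ℝ)..1, g x * w x) ≤ M := by
  have hM : 0 ≤ M := (abs_nonneg _).trans (hgM 0 ⟨le_rfl, zero_le_one⟩)
  have hmono : (∫ x in (0:ℝ)..1, g x * w x) ≤ ∫ x in (0:ℝ)..1, M * (((w x)^2 + 1) / 2) := by
    refine intervalIntegral.integral_mono_on zero_le_one ((hg.mul hw).intervalIntegrable 0 1)
      ((continuous_const.mul (((hw.pow 2).add continuous_const).div_const 2)).intervalIntegrable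
        0 1) fun x hx => ?_
    have hwx : |w x| ≤ ((w x)^2 + 1) / 2 := by nlinarith [sq_abs (w x), sq_nonneg (|w x| - 1)]
    calc g x * w x ≤ |g x| * |w x| := (le_abs_self _).trans (abs_mul _ _).le
      _ ≤ M * (((w x)^2 + 1) / 2) := mul_le_mul (hgM x hx) hwx (abs_nonneg _) hM
  have hval : (∫ x in (0:ℝ)..1, M * (((w x)^2 + 1) / 2))
      = M * (((∫ x in (0:ℝ)..1, (w x)^2) + 1) / 2) := by
    rw [intervalIntegral.integral_const_mul, intervalIntegral.integral_div,
      intervalIntegral.integral_add (f := fun x => w x ^ 2)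
      ((hw.pow 2).intervalIntegrable 0 1) intervalIntegrable_const]
    simp
  rw [hval] at hmono
  nlinarith

lemma bddAbove_dualH1Pairings {f : ℝ → ℝ} (hf : Continuous f) : BddAbove (dualH1Pairings f) := by
  obtain ⟨M, hM⟩ :=
    (isCompact_Icc (a := (0:ℝ)) (b := 1)).exists_bound_of_continuousOn hf.continuousOn
  refine ⟨M, fun y hy => ?_⟩
  obtain ⟨v, hv, hE, rfl⟩ := hy
  exact integral_mul_le_of_abs_le hf hv.continuous (fun x hx => by simpa using hM x hx)
    (integral_sq_le_one_and_integral_deriv_sq_le_one hv hE).1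

lemma integral_le_dualH1Norm {f : ℝ → ℝ} (hf : Continuous f) :
    (∫ x in (0:ℝ)..1, f x) ≤ dualH1Norm f := by
  have hone : (∫ x in (0:ℝ)..1, f x * 1) ∈ dualH1Pairings f :=
    ⟨fun _ => 1, contDiff_const, by simp, rfl⟩
  rw [dualH1Norm_eq_sSup]
  simpa using le_csSup (bddAbove_dualH1Pairings hf) hone

lemma integral_cos_mul_mul_eq {c : ℝ} (hc : c ≠ 0) (hsin : sin c = 0) {v : ℝ → ℝ}
    (hv : ContDiff ℝ 1 v) :
    (∫ x in (0:ℝ)..1, cos (c * x) * v x) = -(∫ x in (0:ℝ)..1, sin (c * x) * deriv v x) / c := by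
  have hF : ∀ x : ℝ, HasDerivAt (fun y => sin (c * y) / c) (cos (c * x)) x := fun x => by
    simpa [hc] using (((hasDerivAt_id x).const_mul c).sin).div_const c
  have ibp := intervalIntegral.integral_mul_deriv_eq_deriv_mul
    (fun x _ => (hv.differentiable one_ne_zero x).hasDerivAt) (fun x _ => hF x)
    ((hv.continuous_deriv le_rfl).intervalIntegrable 0 1)
    ((continuous_cos.comp (continuous_const.mul continuous_id)).intervalIntegrable 0 1)
  simp only [mul_one, mul_zero, hsin, sin_zero, zero_div, mul_zero, sub_zero, zero_sub] at ibp
  have hdiv : (∫ x in (0:ℝ)..1, deriv v x * (sin (c * x) / c))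
      = (∫ x in (0:ℝ)..1, sin (c * x) * deriv v x) / c := by
    rw [← intervalIntegral.integral_div]
    congr 1; ext x; ring
  rw [neg_div, ← hdiv, ← ibp]
  congr 1; ext x; ring

lemma dualH1Norm_cos_mul_le {c : ℝ} (hc : 0 < c) (hsin : sin c = 0) :
    dualH1Norm (fun x => cos (c * x)) ≤ c⁻¹ := by
  refine dualH1Norm_le fun v hv hE => ?_
  have hbound : -(∫ x in (0:ℝ)..1, sin (c * x) * deriv v x) ≤ 1 := by
    rw [← intervalIntegral.integral_neg]
    simp only [← neg_mul]
    exact integral_mul_le_of_abs_le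
      (continuous_sin.comp (continuous_const.mul continuous_id)).neg
      (hv.continuous_deriv le_rfl) (fun x _ => by simpa using abs_sin_le_one (c * x))
      (integral_sq_le_one_and_integral_deriv_sq_le_one hv hE).2
  rw [integral_cos_mul_mul_eq hc.ne' hsin hv, div_le_iff₀ hc, inv_mul_cancel₀ hc.ne']
  exact hbound

lemma integral_cos_mul_eq_zero {c : ℝ} (hc : c ≠ 0) (hsin : sin c = 0) :
    (∫ x in (0:ℝ)..1, cos (c * x)) = 0 := by
  rw [intervalIntegral.integral_comp_mul_left (f := cos) hc, mul_zero, mul_one, integral_cos,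
    hsin]
  simp

lemma integral_cos_mul_sq_eq_half {c : ℝ} (hc : c ≠ 0) (hsin : sin c = 0) :
    (∫ x in (0:ℝ)..1, cos (c * x) ^ 2) = 1 / 2 := by
  rw [intervalIntegral.integral_comp_mul_left (f := fun y => cos y ^ 2) hc, mul_zero, mul_one,
    integral_cos_sq, hsin]
  simp only [smul_eq_mul, mul_zero, sin_zero, sub_zero, zero_add]
  field_simp

lemma one_fourth_le_integral_max_cos_mul {c : ℝ} (hc : c ≠ 0) (hsin : sin c = 0) :
    1 / 4 ≤ ∫ x in (0:ℝ)..1, max (cos (c * x)) 0 := by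
  have hcos : Continuous fun x => cos (c * x) :=
    continuous_cos.comp (continuous_const.mul continuous_id)
  -- For `|a| ≤ 1`, `max a 0 = (a + |a|) / 2 ≥ (a + a²) / 2`.
  have hmono : (∫ x in (0:ℝ)..1, (cos (c * x) + cos (c * x) ^ 2) / 2)
      ≤ ∫ x in (0:ℝ)..1, max (cos (c * x)) 0 := by
    refine intervalIntegral.integral_mono_on zero_le_one
      (((hcos.add (hcos.pow 2)).div_const 2).intervalIntegrable 0 1)
      ((hcos.max continuous_const).intervalIntegrable 0 1) fun x _ => ?_
    have h1 := neg_one_le_cos (c * x)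
    have h2 := cos_le_one (c * x)
    rcases le_total (cos (c * x)) 0 with h | h
    · rw [max_eq_right h]; nlinarith
    · rw [max_eq_left h]; nlinarith
  rw [intervalIntegral.integral_div, intervalIntegral.integral_add
    (f := fun x => cos (c * x)) (g := fun x => cos (c * x) ^ 2) (hcos.intervalIntegrable 0 1)
    ((hcos.pow 2).intervalIntegrable 0 1), integral_cos_mul_eq_zero hc hsin,
    integral_cos_mul_sq_eq_half hc hsin] at hmono
  linarith

/-- The map `u ↦ u⁺` is not bounded from `H¹(0,1)*` to `H¹(0,1)*`:
`‖ψₙ‖_{H¹*} → 0` for `ψₙ(x) = cos(nπx)`, but `‖ψₙ⁺‖_{H¹*}` does not tend to `0`. -/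
theorem positive_part_stmt7 :
    Tendsto (fun n : ℕ => dualH1Norm (fun x => Real.cos (n * π * x))) atTop (nhds 0) ∧
    ¬ Tendsto (fun n : ℕ => dualH1Norm (fun x => max (Real.cos (n * π * x)) 0))
        atTop (nhds 0) := by
  have hpos : ∀ n : ℕ, 1 ≤ n → 0 < (n:ℝ) * π := fun n hn => by
    have : (1:ℝ) ≤ n := by exact_mod_cast hn
    positivity
  constructor
  · refine squeeze_zero' (Eventually.of_forall fun n => dualH1Norm_nonneg _) ?_
      (tendsto_natCast_atTop_atTop.atTop_mul_const pi_pos).inv_tendsto_atTop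
    filter_upwards [eventually_ge_atTop 1] with n hn
    exact dualH1Norm_cos_mul_le (hpos n hn) (sin_nat_mul_pi n)
  · intro h
    have hlower : ∀ᶠ n : ℕ in atTop,
        1 / 4 ≤ dualH1Norm (fun x => max (Real.cos (n * π * x)) 0) := by
      filter_upwards [eventually_ge_atTop 1] with n hn
      exact (one_fourth_le_integral_max_cos_mul (hpos n hn).ne' (sin_nat_mul_pi n)).trans
        (integral_le_dualH1Norm
          ((continuous_cos.comp (continuous_const.mul continuous_id)).max continuous_const))
    linarith [ge_of_tendsto h hlower]
end

section
/- For all n ≥ 1, the L² pairing of ψₙ⁺ = max(cos(nπx),0) with vₑ(x) = min(4x, 1, 4(1−x)) satisfies ∫₀¹ ψₙ⁺(x) vₑ(x) dx ≥ 1/π − 1/√12 > 0. -/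
/-!
With `ψ = max (cos (n π x)) 0` and `v` the trapezoid, `∫ ψ v = ∫ ψ - ∫ ψ (1 - v)`.
The first integral is `1/π`, because `max (cos u) 0 = (cos u + |cos u|)/2` and `|cos|` has
period `π` and integral `2` over a period. By Cauchy–Schwarz the second is at most
`‖ψ‖₂ ‖1 - v‖₂ ≤ (1/√2)(1/√6) = 1/√12`, using `ψ² ≤ cos²` and `∫₀¹ cos² (n π x) = 1/2`.
Positivity of the bound is `π < √12`.
-/

open Real MeasureTheory intervalIntegral

theorem integral_mul_le_of_integral_sq_le {f g : ℝ → ℝ} {a b A B : ℝ} (hab : a ≤ b)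
    (hfg : IntervalIntegrable (fun x => f x * g x) volume a b)
    (hf : IntervalIntegrable (fun x => f x ^ 2) volume a b)
    (hg : IntervalIntegrable (fun x => g x ^ 2) volume a b)
    (hA : 0 < A) (hB : 0 < B)
    (hfA : ∫ x in a..b, f x ^ 2 ≤ A ^ 2) (hgB : ∫ x in a..b, g x ^ 2 ≤ B ^ 2) :
    ∫ x in a..b, f x * g x ≤ A * B := by
  -- weighted AM-GM, with the weights that balance the two bounds
  have amgm : ∀ x, f x * g x ≤ (B / A * f x ^ 2 + A / B * g x ^ 2) / 2 := fun x => by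
    have := sq_nonneg (B * f x - A * g x)
    field_simp
    nlinarith [mul_pos hA hB]
  calc ∫ x in a..b, f x * g x
      ≤ ∫ x in a..b, (B / A * f x ^ 2 + A / B * g x ^ 2) / 2 :=
        integral_mono_on hab hfg (((hf.const_mul _).add (hg.const_mul _)).div_const _)
          fun x _ => amgm x
    _ = (B / A * ∫ x in a..b, f x ^ 2) / 2 + (A / B * ∫ x in a..b, g x ^ 2) / 2 := by
        rw [intervalIntegral.integral_div, integral_add (hf.const_mul _) (hg.const_mul _),
          intervalIntegral.integral_const_mul, intervalIntegral.integral_const_mul, add_div]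
    _ ≤ (B / A * A ^ 2) / 2 + (A / B * B ^ 2) / 2 := by gcongr
    _ = A * B := by field_simp; ring

theorem periodic_abs_cos : Function.Periodic (fun u => |cos u|) π := fun u => by
  simp [cos_add_pi]

theorem integral_abs_cos_zero_pi : ∫ u in (0:ℝ)..π, |cos u| = 2 := by
  rw [show π = 0 + π by ring, periodic_abs_cos.intervalIntegral_add_eq 0 (-(π / 2)),
    integral_congr (g := cos)]
  · simp [integral_cos]; norm_num
  · intro u hu
    rw [Set.uIcc_of_le (by linarith [pi_pos])] at hu
    exact abs_of_nonneg (cos_nonneg_of_mem_Icc ⟨hu.1, by linarith [hu.2]⟩)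

theorem integral_abs_cos_zero_nat_mul_pi (m : ℕ) : ∫ u in (0:ℝ)..m * π, |cos u| = 2 * m := by
  have := periodic_abs_cos.intervalIntegral_add_zsmul_eq m 0
    (fun _ _ => continuous_cos.abs.intervalIntegrable _ _)
  simp only [zero_add, zsmul_eq_mul, Int.cast_natCast] at this
  rw [this, integral_abs_cos_zero_pi]; ring

theorem integral_max_cos_zero_nat_mul_pi (m : ℕ) :
    ∫ u in (0:ℝ)..m * π, max (cos u) 0 = m := by
  have hpos : ∀ u : ℝ, max (cos u) 0 = (cos u + |cos u|) / 2 := fun u => by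
    rcases le_total (cos u) 0 with h | h
    · rw [max_eq_right h, abs_of_nonpos h]; ring
    · rw [max_eq_left h, abs_of_nonneg h]; ring
  simp_rw [hpos]
  rw [intervalIntegral.integral_div, integral_add (continuous_cos.intervalIntegrable _ _)
    (continuous_cos.abs.intervalIntegrable _ _), integral_cos,
    integral_abs_cos_zero_nat_mul_pi, sin_nat_mul_pi]
  simp

theorem integral_max_cos_nat_mul_pi_mul {n : ℕ} (hn : n ≠ 0) :
    ∫ x in (0:ℝ)..1, max (cos (n * π * x)) 0 = 1 / π := by
  have hc : (n : ℝ) * π ≠ 0 := by positivity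
  rw [integral_comp_mul_left (fun u => max (cos u) 0) hc, mul_zero, mul_one,
    integral_max_cos_zero_nat_mul_pi, smul_eq_mul]
  field_simp

theorem integral_cos_nat_mul_pi_mul_sq {n : ℕ} (hn : n ≠ 0) :
    ∫ x in (0:ℝ)..1, cos (n * π * x) ^ 2 = 1 / 2 := by
  have hc : (n : ℝ) * π ≠ 0 := by positivity
  rw [integral_comp_mul_left (fun u => cos u ^ 2) hc, mul_zero, mul_one, integral_cos_sq,
    sin_nat_mul_pi, smul_eq_mul]
  field_simp
  simp

noncomputable def trapezoid (x : ℝ) : ℝ := min (min (4 * x) 1) (4 * (1 - x))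

@[fun_prop]
theorem continuous_trapezoid : Continuous trapezoid := by
  unfold trapezoid; fun_prop

theorem trapezoid_of_le_one_fourth {x : ℝ} (hx : x ≤ 1 / 4) : trapezoid x = 4 * x := by
  simp only [trapezoid, min_def]; split_ifs <;> linarith

theorem trapezoid_of_mem_Icc {x : ℝ} (hx : x ∈ Set.Icc (1 / 4) (3 / 4)) : trapezoid x = 1 := by
  simp only [trapezoid, min_def]; split_ifs <;> linarith [hx.1, hx.2]

theorem trapezoid_of_three_fourths_le {x : ℝ} (hx : 3 / 4 ≤ x) : trapezoid x = 4 * (1 - x) := by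
  simp only [trapezoid, min_def]; split_ifs <;> linarith

theorem integral_one_sub_trapezoid_sq : ∫ x in (0:ℝ)..1, (1 - trapezoid x) ^ 2 = 1 / 6 := by
  have hint : ∀ a b : ℝ, IntervalIntegrable (fun x => (1 - trapezoid x) ^ 2) volume a b :=
    fun a b => ((continuous_const.sub continuous_trapezoid).pow 2).intervalIntegrable a b
  have hleft : ∫ x in (0:ℝ)..1 / 4, (1 - trapezoid x) ^ 2 = 1 / 12 := by
    rw [integral_congr (g := fun x => (1 - 4 * x) ^ 2)]
    · simp [integral_comp_sub_mul (fun x => x ^ 2)]; norm_num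
    · intro x hx
      rw [Set.uIcc_of_le (by norm_num)] at hx
      simp only [trapezoid_of_le_one_fourth hx.2]
  have hmid : ∫ x in (1 / 4 : ℝ)..3 / 4, (1 - trapezoid x) ^ 2 = 0 := by
    rw [integral_congr (g := fun _ => 0)]
    · simp
    · intro x hx
      rw [Set.uIcc_of_le (by norm_num)] at hx
      simp [trapezoid_of_mem_Icc hx]
  have hright : ∫ x in (3 / 4 : ℝ)..1, (1 - trapezoid x) ^ 2 = 1 / 12 := by
    rw [integral_congr (g := fun x => (4 * x - 3) ^ 2)]
    · simp [integral_comp_mul_sub (fun x => x ^ 2)]; norm_num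
    · intro x hx
      rw [Set.uIcc_of_le (by norm_num)] at hx
      simp only [trapezoid_of_three_fourths_le hx.1]; ring
  rw [← integral_add_adjacent_intervals (hint 0 (1 / 4)) (hint _ 1),
    ← integral_add_adjacent_intervals (hint _ (3 / 4)) (hint _ 1), hleft, hmid, hright]
  norm_num

/-- For all `n ≥ 1`, the `L²` pairing of `ψₙ⁺ = max(cos(nπx),0)` with
`vₑ(x) = min(4x, 1, 4(1−x))` satisfies `∫₀¹ ψₙ⁺ vₑ ≥ 1/π − 1/√12 > 0`. -/
theorem positive_part_stmt10 (n : ℕ) (hn : 1 ≤ n) :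
    (1/π - 1/Real.sqrt 12
      ≤ ∫ x in (0:ℝ)..1, max (Real.cos (n * π * x)) 0 * min (min (4*x) 1) (4*(1-x))) ∧
    0 < 1/π - 1/Real.sqrt 12 := by
  have hn0 : n ≠ 0 := by omega
  set ψ : ℝ → ℝ := fun x => max (cos (n * π * x)) 0
  have hψ : Continuous ψ := by fun_prop
  have hψ_le : ∀ x, ψ x ^ 2 ≤ cos (n * π * x) ^ 2 := fun x => by
    rcases le_total (cos (n * π * x)) 0 with h | h <;> simp [ψ, h, sq_nonneg]
  have hψ_sq : ∫ x in (0:ℝ)..1, ψ x ^ 2 ≤ (1 / √2) ^ 2 := calc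
    _ ≤ ∫ x in (0:ℝ)..1, cos (n * π * x) ^ 2 :=
      integral_mono_on zero_le_one (Continuous.intervalIntegrable (by fun_prop) _ _)
        (Continuous.intervalIntegrable (by fun_prop) _ _) fun x _ => hψ_le x
    _ = (1 / √2) ^ 2 := by rw [integral_cos_nat_mul_pi_mul_sq hn0, div_pow, sq_sqrt] <;> norm_num
  have hv_sq : ∫ x in (0:ℝ)..1, (1 - trapezoid x) ^ 2 ≤ (1 / √6) ^ 2 := by
    rw [integral_one_sub_trapezoid_sq, div_pow, sq_sqrt] <;> norm_num
  have hdefect : ∫ x in (0:ℝ)..1, ψ x * (1 - trapezoid x) ≤ 1 / √2 * (1 / √6) :=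
    integral_mul_le_of_integral_sq_le zero_le_one
      (Continuous.intervalIntegrable (by fun_prop) _ _)
      (Continuous.intervalIntegrable (by fun_prop) _ _)
      (Continuous.intervalIntegrable (by fun_prop) _ _)
      (by positivity) (by positivity) hψ_sq hv_sq
  have hsplit : ∫ x in (0:ℝ)..1, ψ x * trapezoid x
      = (∫ x in (0:ℝ)..1, ψ x) - ∫ x in (0:ℝ)..1, ψ x * (1 - trapezoid x) := by
    rw [← intervalIntegral.integral_sub (hψ.intervalIntegrable _ _)
      (Continuous.intervalIntegrable (by fun_prop) _ _)]
    congr 1; ext x; ring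
  have hsqrt : 1 / √2 * (1 / √6) = 1 / √12 := by
    rw [one_div_mul_one_div, ← sqrt_mul zero_le_two]; norm_num
  have hπ : π < √12 := (lt_sqrt pi_pos.le).2 (by nlinarith [pi_lt_d2, pi_pos])
  refine ⟨?_, sub_pos.2 (one_div_lt_one_div_of_lt pi_pos hπ)⟩
  change _ ≤ ∫ x in (0:ℝ)..1, ψ x * trapezoid x
  rw [hsplit, integral_max_cos_nat_mul_pi_mul hn0, ← hsqrt]
  linarith
end
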